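/- arXiv:2605.10671 — 2 statements merged into one kernel-verified Lean document; each statement's English description precedes it below -/
import Mathlib

section
/- Natural policy gradient is an instance of doubly smoothed policy iteration: let (π_k, θ_k) be an NPG sequence with positive stepsizes (α_k), and set β_0 = 1, β_k = α_k / Σ_{i=0}^k α_i for k ≥ 1, τ = 1/α_0, and define Q̄_0 = 0 and Q̄_{k+1} = (1−β_k) Q̄_k + β_k Q^{π_k}. Then for every k ≥ 0: (i) Q̄_{k+1} = (Σ_{i=0}^k α_i Q^{π_i}) / (Σ_{i=0}^k α_i); (ii) ∏_{j=1}^k (1−β_j) = α_0 / Σ_{i=0}^k α_i; and (iii) for every state s, π_{k+1}(·|s) is the unique maximizer over μ ∈ Δ(A) of μ·Q̄_{k+1}(s) + τ ∏_{j=1}^k (1−β_j) · h(μ), where h is the Shannon entropy. In particular the NPG policy sequence coincides with the DSPI policy sequence with ν = h, these stepsizes, and this τ. -/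
open Finset

noncomputable section

/-- A finite discounted MDP: transition kernel `p`, reward `R` in `[0,1]`,
discount factor `γ ∈ (0,1)`. -/
structure MDP (S A : Type*) [Fintype S] [Fintype A] where
  p : S → A → S → ℝ
  R : S → A → ℝ
  γ : ℝ
  hp : ∀ s a, p s a ∈ stdSimplex ℝ S
  hR : ∀ s a, R s a ∈ Set.Icc (0 : ℝ) 1
  hγ : γ ∈ Set.Ioo (0 : ℝ) 1

variable {S A : Type*} [Fintype S] [Fintype A] [Nonempty S] [Nonempty A]

/-- The Bellman operator `H^π` of a policy `pol`. -/
def bellmanPol (M : MDP S A) (pol : S → A → ℝ) (Q : S → A → ℝ) : S → A → ℝ :=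
  fun s a => M.R s a + M.γ * ∑ s', M.p s a s' * ∑ a', pol s' a' * Q s' a'

/-- The Bellman optimality operator `H`. -/
def bellmanOpt (M : MDP S A) (Q : S → A → ℝ) : S → A → ℝ :=
  fun s a => M.R s a + M.γ * ∑ s', M.p s a s' * (⨆ a', Q s' a')

/-- The sup-norm of a vector in `ℝ^{S×A}`. -/
def supNormQ (Q : S → A → ℝ) : ℝ := ⨆ x : S × A, |Q x.1 x.2|

/-- The sup-norm of a vector in `ℝ^S`. -/
def supNormV (V : S → ℝ) : ℝ := ⨆ s : S, |V s|

/-- The value function `V^π` of a policy `pol` with `Q`-function `Qpol`. -/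
def valueOf (pol : S → A → ℝ) (Qpol : S → A → ℝ) : S → ℝ := fun s => ∑ a, pol s a * Qpol s a

/-- The optimal value function `V*` derived from `Q*`. -/
def Vstar (Qstar : S → A → ℝ) : S → ℝ := fun s => ⨆ a, Qstar s a

/-- The Shannon entropy on the probability simplex. -/
def entropyFn (μ : A → ℝ) : ℝ := -∑ a, μ a * Real.log (μ a)

/-- An NPG sequence: `pol 0` is uniform, `θ 0 = 0`, `θ (k+1) = θ k + α k • Q^{π_k}`,
and `pol (k+1) s` maximizes `μ ↦ μ · θ (k+1) s + h(μ)` over the simplex. -/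
structure NPGSeq (M : MDP S A) (α : ℕ → ℝ) where
  pol : ℕ → S → A → ℝ
  Qpi : ℕ → S → A → ℝ
  θ : ℕ → S → A → ℝ
  hpol : ∀ k s, pol k s ∈ stdSimplex ℝ A
  hQpi : ∀ k, bellmanPol M (pol k) (Qpi k) = Qpi k
  hpol0 : ∀ s a, pol 0 s a = (Fintype.card A : ℝ)⁻¹
  hθ0 : θ 0 = 0
  hθSucc : ∀ k, θ (k + 1) = θ k + α k • Qpi k
  hmax : ∀ k s, ∀ μ ∈ stdSimplex ℝ A,
      ∑ a, μ a * θ (k + 1) s a + entropyFn μ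
        ≤ ∑ a, pol (k + 1) s a * θ (k + 1) s a + entropyFn (pol (k + 1) s)

/-!
Unrolling the two recursions gives `θ_{k+1} = ∑_{i ≤ k} α_i Q^{π_i}` and
`Q̄_{k+1} = θ_{k+1} / ∑_{i ≤ k} α_i`, while the DSPI temperature `τ ∏_{j=1}^k (1 - β_j)`
telescopes to `1 / ∑_{i ≤ k} α_i`. Hence the DSPI objective at step `k + 1` is the NPG objective
multiplied by the positive constant `1 / ∑_{i ≤ k} α_i`, so both have the same maximizers, and the
maximizer is unique because the entropy is strictly concave on the simplex.
-/

open Real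

section Simplex

variable {ι : Type*} [Fintype ι]

theorem StrictConcaveOn.sum_comp_apply {s : Set ℝ} {f : ℝ → ℝ}
    (hf : StrictConcaveOn ℝ s f) :
    StrictConcaveOn ℝ (Set.univ.pi fun _ : ι => s) fun x => ∑ i, f (x i) := by
  refine ⟨convex_pi fun _ _ => hf.1, fun x hx y hy hxy a b ha hb hab => ?_⟩
  obtain ⟨i₀, hi₀⟩ := Function.ne_iff.1 hxy
  simp only [smul_eq_mul, Pi.add_apply, Pi.smul_apply, mul_sum, ← sum_add_distrib]
  exact sum_lt_sum (fun i _ => hf.concaveOn.2 (hx i trivial) (hy i trivial) ha.le hb.le hab)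
    ⟨i₀, mem_univ _, hf.2 (hx i₀ trivial) (hy i₀ trivial) hi₀ ha hb hab⟩

theorem entropyFn_eq_sum_negMulLog (μ : ι → ℝ) :
    entropyFn μ = ∑ i, negMulLog (μ i) := by
  simp only [entropyFn, negMulLog, neg_mul, sum_neg_distrib]

theorem strictConcaveOn_entropyFn :
    StrictConcaveOn ℝ (stdSimplex ℝ ι) entropyFn := by
  have h := (strictConcaveOn_negMulLog.sum_comp_apply (ι := ι)).subset
    (fun μ hμ i _ => hμ.1 i) (convex_stdSimplex ℝ ι)
  simpa only [← entropyFn_eq_sum_negMulLog] using h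

/-- `μ ↦ μ · q + τ h(μ)`: the NPG objective for `τ = 1`, the DSPI objective for the DSPI
temperature `τ`. -/
def regObjective (q : ι → ℝ) (τ : ℝ) (μ : ι → ℝ) : ℝ :=
  ∑ i, μ i * q i + τ * entropyFn μ

theorem regObjective_smul (c : ℝ) (q : ι → ℝ) (τ : ℝ) (μ : ι → ℝ) :
    regObjective (c • q) (c * τ) μ = c * regObjective q τ μ := by
  simp only [regObjective, Pi.smul_apply, smul_eq_mul, mul_add, mul_sum, mul_assoc, mul_left_comm]

theorem isMaxOn_regObjective_smul_iff {c : ℝ} (hc : 0 < c)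
    (q : ι → ℝ) (τ : ℝ) (s : Set (ι → ℝ)) (μ : ι → ℝ) :
    IsMaxOn (regObjective (c • q) (c * τ)) s μ ↔ IsMaxOn (regObjective q τ) s μ := by
  simp only [isMaxOn_iff, regObjective_smul, mul_le_mul_iff_right₀ hc]

theorem strictConcaveOn_regObjective_one (q : ι → ℝ) :
    StrictConcaveOn ℝ (stdSimplex ℝ ι) (regObjective q 1) := by
  have hlin : ConcaveOn ℝ (stdSimplex ℝ ι) fun μ => ∑ i, μ i * q i :=
    ⟨convex_stdSimplex ℝ ι, fun x _ y _ a b _ _ _ => le_of_eq <| by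
      simp only [smul_eq_mul, Pi.add_apply, Pi.smul_apply, mul_sum, ← sum_add_distrib]
      exact sum_congr rfl fun i _ => by ring⟩
  have hsplit : regObjective q 1 = (fun μ => ∑ i, μ i * q i) + entropyFn := by
    ext μ
    simp only [regObjective, one_mul, Pi.add_apply]
  rw [hsplit]
  exact hlin.add_strictConcaveOn strictConcaveOn_entropyFn

end Simplex

theorem one_sub_div_sum_range_succ (α : ℕ → ℝ) (n : ℕ) (h : ∑ i ∈ range (n + 1), α i ≠ 0) :
    1 - α n / ∑ i ∈ range (n + 1), α i
      = (∑ i ∈ range n, α i) / ∑ i ∈ range (n + 1), α i := by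
  rw [eq_div_iff h, sub_mul, one_mul, div_mul_cancel₀ _ h, sum_range_succ, add_sub_cancel_right]

theorem sum_range_succ_pos {α : ℕ → ℝ} (hα : ∀ k, 0 < α k) (k : ℕ) :
    0 < ∑ i ∈ range (k + 1), α i :=
  sum_pos (fun i _ => hα i) nonempty_range_add_one

theorem prod_one_sub_eq_div_sum_range {α β : ℕ → ℝ} (hα : ∀ k, 0 < α k)
    (hβ : ∀ k ≥ 1, β k = α k / ∑ i ∈ range (k + 1), α i) (k : ℕ) :
    ∏ j ∈ Icc 1 k, (1 - β j) = α 0 / ∑ i ∈ range (k + 1), α i := by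
  induction k with
  | zero => simp [(hα 0).ne']
  | succ k ih =>
    have hS := (sum_range_succ_pos hα k).ne'
    have hS' := (sum_range_succ_pos hα (k + 1)).ne'
    rw [prod_Icc_succ_top (by omega), ih, hβ (k + 1) (by omega),
      one_sub_div_sum_range_succ α (k + 1) hS']
    field_simp

theorem succ_eq_weighted_average {E : Type*} [AddCommGroup E] [Module ℝ E]
    {α β : ℕ → ℝ} (hα : ∀ k, 0 < α k) (hβ0 : β 0 = 1)
    (hβ : ∀ k ≥ 1, β k = α k / ∑ i ∈ range (k + 1), α i)
    {x y : ℕ → E} (hx : ∀ k, x (k + 1) = (1 - β k) • x k + β k • y k) (k : ℕ) :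
    x (k + 1) = (∑ i ∈ range (k + 1), α i)⁻¹ • ∑ i ∈ range (k + 1), α i • y i := by
  induction k with
  | zero => simp [hx 0, hβ0, smul_smul, (hα 0).ne']
  | succ k ih =>
    have hS := (sum_range_succ_pos hα k).ne'
    have hS' := (sum_range_succ_pos hα (k + 1)).ne'
    rw [hx, ih, hβ (k + 1) (by omega), one_sub_div_sum_range_succ α (k + 1) hS',
      sum_range_succ (fun i => α i • y i) (k + 1), smul_add, smul_smul, smul_smul]
    congr 2 <;> field_simp

namespace NPGSeq

omit [Nonempty S] [Nonempty A] in
theorem θ_succ_eq_sum {M : MDP S A} {α : ℕ → ℝ} (N : NPGSeq M α) (k : ℕ) :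
    N.θ (k + 1) = ∑ i ∈ range (k + 1), α i • N.Qpi i := by
  induction k with
  | zero => simp [N.hθSucc 0, N.hθ0]
  | succ k ih => rw [N.hθSucc (k + 1), ih, ← sum_range_succ]

omit [Nonempty S] [Nonempty A] in
theorem isMaxOn_pol_succ {M : MDP S A} {α : ℕ → ℝ} (N : NPGSeq M α) (k : ℕ) (s : S) :
    IsMaxOn (regObjective (N.θ (k + 1) s) 1) (stdSimplex ℝ A) (N.pol (k + 1) s) := by
  simpa only [isMaxOn_iff, regObjective, one_mul] using N.hmax k s

omit [Nonempty S] [Nonempty A] in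
theorem isMaxOn_smul_θ_succ_iff {M : MDP S A} {α : ℕ → ℝ} (N : NPGSeq M α) (k : ℕ) (s : S)
    {c : ℝ} (hc : 0 < c) {μ : A → ℝ} (hμ : μ ∈ stdSimplex ℝ A) :
    IsMaxOn (regObjective (c • N.θ (k + 1) s) c) (stdSimplex ℝ A) μ ↔ μ = N.pol (k + 1) s := by
  have hscale := isMaxOn_regObjective_smul_iff hc (N.θ (k + 1) s) 1 (stdSimplex ℝ A) μ
  rw [mul_one] at hscale
  rw [hscale]
  refine ⟨fun hμmax => (strictConcaveOn_regObjective_one _).eq_of_isMaxOn hμmax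
    (N.isMaxOn_pol_succ k s) hμ (N.hpol (k + 1) s), ?_⟩
  rintro rfl
  exact N.isMaxOn_pol_succ k s

end NPGSeq

theorem npg_is_dspi_general
    (M : MDP S A)
    (α : ℕ → ℝ) (hα : ∀ k, 0 < α k)
    (N : NPGSeq M α)
    (β : ℕ → ℝ) (hβ0 : β 0 = 1)
    (hβ : ∀ k ≥ 1, β k = α k / ∑ i ∈ Finset.range (k + 1), α i)
    (Qbar : ℕ → S → A → ℝ)
    (hQbarSucc : ∀ k, Qbar (k + 1) = (1 - β k) • Qbar k + β k • N.Qpi k) :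
    ∀ k : ℕ,
      (Qbar (k + 1) = (∑ i ∈ Finset.range (k + 1), α i)⁻¹ •
          ∑ i ∈ Finset.range (k + 1), α i • N.Qpi i) ∧
      (∏ j ∈ Finset.Icc 1 k, (1 - β j) = α 0 / ∑ i ∈ Finset.range (k + 1), α i) ∧
      (∀ s,
        (∀ μ ∈ stdSimplex ℝ A,
          ∑ a, μ a * Qbar (k + 1) s a
              + ((α 0)⁻¹ * ∏ j ∈ Finset.Icc 1 k, (1 - β j)) * entropyFn μ
            ≤ ∑ a, N.pol (k + 1) s a * Qbar (k + 1) s a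
              + ((α 0)⁻¹ * ∏ j ∈ Finset.Icc 1 k, (1 - β j)) * entropyFn (N.pol (k + 1) s)) ∧
        (∀ μ ∈ stdSimplex ℝ A,
          (∀ μ' ∈ stdSimplex ℝ A,
            ∑ a, μ' a * Qbar (k + 1) s a
                + ((α 0)⁻¹ * ∏ j ∈ Finset.Icc 1 k, (1 - β j)) * entropyFn μ'
              ≤ ∑ a, μ a * Qbar (k + 1) s a
                + ((α 0)⁻¹ * ∏ j ∈ Finset.Icc 1 k, (1 - β j)) * entropyFn μ) →
          μ = N.pol (k + 1) s)) := by
  intro k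
  have hprod := prod_one_sub_eq_div_sum_range hα hβ k
  have hQbar := succ_eq_weighted_average hα hβ0 hβ hQbarSucc k
  have hc : 0 < (∑ i ∈ range (k + 1), α i)⁻¹ := inv_pos.2 (sum_range_succ_pos hα k)
  have htemp : (α 0)⁻¹ * ∏ j ∈ Icc 1 k, (1 - β j) = (∑ i ∈ range (k + 1), α i)⁻¹ := by
    rw [hprod, ← div_eq_inv_mul, div_div_cancel_left' (hα 0).ne']
  have hQθ : Qbar (k + 1) = (∑ i ∈ range (k + 1), α i)⁻¹ • N.θ (k + 1) := by
    rw [hQbar, N.θ_succ_eq_sum]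
  refine ⟨hQbar, hprod, fun s => ?_⟩
  rw [htemp, hQθ]
  exact ⟨(N.isMaxOn_smul_θ_succ_iff k s hc (N.hpol (k + 1) s)).2 rfl,
    fun μ hμ hmax => (N.isMaxOn_smul_θ_succ_iff k s hc hμ).1 hmax⟩

/-- **NPG is an instance of DSPI** (Proposition 1). -/
theorem npg_is_dspi
    (M : MDP S A)
    (α : ℕ → ℝ) (hα : ∀ k, 0 < α k)
    (N : NPGSeq M α)
    (β : ℕ → ℝ) (hβ0 : β 0 = 1)
    (hβ : ∀ k ≥ 1, β k = α k / ∑ i ∈ Finset.range (k + 1), α i)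
    (Qbar : ℕ → S → A → ℝ) (hQbar0 : Qbar 0 = 0)
    (hQbarSucc : ∀ k, Qbar (k + 1) = (1 - β k) • Qbar k + β k • N.Qpi k) :
    ∀ k : ℕ,
      (Qbar (k + 1) = (∑ i ∈ Finset.range (k + 1), α i)⁻¹ •
          ∑ i ∈ Finset.range (k + 1), α i • N.Qpi i) ∧
      (∏ j ∈ Finset.Icc 1 k, (1 - β j) = α 0 / ∑ i ∈ Finset.range (k + 1), α i) ∧
      (∀ s,
        (∀ μ ∈ stdSimplex ℝ A,
          ∑ a, μ a * Qbar (k + 1) s a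
              + ((α 0)⁻¹ * ∏ j ∈ Finset.Icc 1 k, (1 - β j)) * entropyFn μ
            ≤ ∑ a, N.pol (k + 1) s a * Qbar (k + 1) s a
              + ((α 0)⁻¹ * ∏ j ∈ Finset.Icc 1 k, (1 - β j)) * entropyFn (N.pol (k + 1) s)) ∧
        (∀ μ ∈ stdSimplex ℝ A,
          (∀ μ' ∈ stdSimplex ℝ A,
            ∑ a, μ' a * Qbar (k + 1) s a
                + ((α 0)⁻¹ * ∏ j ∈ Finset.Icc 1 k, (1 - β j)) * entropyFn μ'
              ≤ ∑ a, μ a * Qbar (k + 1) s a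
                + ((α 0)⁻¹ * ∏ j ∈ Finset.Icc 1 k, (1 - β j)) * entropyFn μ) →
          μ = N.pol (k + 1) s)) :=
  npg_is_dspi_general M α hα N β hβ0 hβ Qbar hQbarSucc
end
end

section
/- Contractive recursion for DSPI: let (π_k, Q̄_k) be a DSPI sequence with stepsizes satisfying β_0 = 1 and β_k ∈ [0,1] for k ≥ 1. Then for all k ≥ 1, ‖Q* − Q̄_{k+1}‖∞ ≤ (1 − (1−γ)β_k) ‖Q* − Q̄_k‖∞ + γ β_k η_{k−1} ν_max, where η_{k−1} = τ ∏_{j=1}^{k−1} (1−β_j). -/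
open Finset

noncomputable section

variable {S A : Type*} [Fintype S] [Fintype A] [Nonempty S] [Nonempty A]

/-- The smoothed Bellman optimality operator `H_η`. -/
def smoothedOpt (M : MDP S A) (ν : (A → ℝ) → ℝ) (η : ℝ) (Q : S → A → ℝ) : S → A → ℝ :=
  fun s a => M.R s a + M.γ * ∑ s', M.p s a s' *
    (⨆ μ : stdSimplex ℝ A, (∑ a', μ.1 a' * Q s' a' + η * ν μ.1))

/-- The smoothed Bellman operator `H_η^π` of a policy `pol`. -/
def smoothedPol (M : MDP S A) (ν : (A → ℝ) → ℝ) (η : ℝ) (pol : S → A → ℝ)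
    (Q : S → A → ℝ) : S → A → ℝ :=
  fun s a => M.R s a + M.γ * ∑ s', M.p s a s' * (∑ a', pol s' a' * Q s' a' + η * ν (pol s'))

/-- `ν_max := max_{μ ∈ Δ(A)} ν(μ)`. -/
def nuMax (ν : (A → ℝ) → ℝ) : ℝ := sSup (ν '' stdSimplex ℝ A)

/-- `η_k = τ ∏_{j=1}^k (1 - β_j)`. -/
def eta (τ : ℝ) (β : ℕ → ℝ) (k : ℕ) : ℝ := τ * ∏ j ∈ Finset.Icc 1 k, (1 - β j)

/-- A DSPI sequence: policies `pol k` (with `Q`-functions `Qpi k`) and averaged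
`Q`-functions `Qbar k` satisfying the DSPI recursion. -/
structure DSPISeq (M : MDP S A) (ν : (A → ℝ) → ℝ) (τ : ℝ) (β : ℕ → ℝ) where
  pol : ℕ → S → A → ℝ
  Qpi : ℕ → S → A → ℝ
  Qbar : ℕ → S → A → ℝ
  hpol : ∀ k s, pol k s ∈ stdSimplex ℝ A
  hQpi : ∀ k, bellmanPol M (pol k) (Qpi k) = Qpi k
  hpol0 : ∀ s, ∀ μ ∈ stdSimplex ℝ A, ν μ ≤ ν (pol 0 s)
  hQbar0 : Qbar 0 = 0
  hQbarSucc : ∀ k, Qbar (k + 1) = (1 - β k) • Qbar k + β k • Qpi k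
  hgreedy : ∀ k, smoothedPol M ν (eta τ β k) (pol (k + 1)) (Qbar (k + 1))
      = smoothedOpt M ν (eta τ β k) (Qbar (k + 1))

/-!
Write `Q̄ = Q̄_{k}`, `π = π_{k}`, `η = η_{k-1}`. The DSPI recursion keeps the invariant
`Q̄ + γ η ν_max ≤ H_η(Q̄)` (at `k = 1` because `π_0` maximises `ν`; it is propagated because
`H^π_η` is affine in `(Q, η)` and `η_k = (1 - β_k) η_{k-1}`). Since `H_η(Q̄) = H^π_η(Q̄)` exceeds
`H^π(Q̄)` by at most `γ η ν_max`, the invariant gives `Q̄ ≤ H^π(Q̄)`, hence `Q̄ ≤ Q^π ≤ Q*` by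
monotonicity of `H^π`. Then `Q* - Q^π = H(Q*) - H(Q̄) + H(Q̄) - Q^π ≤ γ ‖Q* - Q̄‖ + γ η ν_max`, using
`H ≤ H_η`, and the bound follows from `Q* - Q̄_{k+1} = (1 - β_k)(Q* - Q̄) + β_k (Q* - Q^π) ≥ 0`.
-/

set_option linter.unusedSectionVars false

lemma sum_mul_le_of_mem_stdSimplex {ι : Type*} [Fintype ι] {w x : ι → ℝ} {c : ℝ}
    (hw : w ∈ stdSimplex ℝ ι) (h : ∀ i, x i ≤ c) : ∑ i, w i * x i ≤ c :=
  calc ∑ i, w i * x i ≤ ∑ i, w i * c :=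
        sum_le_sum fun i _ => mul_le_mul_of_nonneg_left (h i) (hw.1 i)
    _ = c := by rw [← sum_mul, hw.2, one_mul]

lemma sum_mul_sub_sum_mul_le_of_mem_stdSimplex {ι : Type*} [Fintype ι] {w x y : ι → ℝ} {c : ℝ}
    (hw : w ∈ stdSimplex ℝ ι) (h : ∀ i, x i - y i ≤ c) :
    ∑ i, w i * x i - ∑ i, w i * y i ≤ c := by
  simp only [← sum_sub_distrib, ← mul_sub]
  exact sum_mul_le_of_mem_stdSimplex hw h

lemma ciSup_sub_ciSup_le {ι : Type*} [Finite ι] [Nonempty ι] {x y : ι → ℝ} {c : ℝ}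
    (h : ∀ i, x i - y i ≤ c) : (⨆ i, x i) - ⨆ i, y i ≤ c :=
  sub_le_iff_le_add.2 <| ciSup_le fun i => by
    linarith [h i, le_ciSup (Set.finite_range y).bddAbove i]

lemma abs_le_supNormQ (Q : S → A → ℝ) (s : S) (a : A) : |Q s a| ≤ supNormQ Q :=
  le_ciSup (f := fun x : S × A => |Q x.1 x.2|) (Set.finite_range _).bddAbove (s, a)

lemma supNormQ_le {Q : S → A → ℝ} {c : ℝ} (h : ∀ s a, |Q s a| ≤ c) : supNormQ Q ≤ c :=
  ciSup_le fun x => h x.1 x.2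

lemma le_of_forall_sub_le_imp_sub_le_mul {γ : ℝ} (hγ : γ < 1) {X Y : S → A → ℝ}
    (h : ∀ c, (∀ s a, X s a - Y s a ≤ c) → ∀ s a, X s a - Y s a ≤ γ * c) (s : S) (a : A) :
    X s a ≤ Y s a := by
  set c := ⨆ x : S × A, X x.1 x.2 - Y x.1 x.2
  have hc : ∀ s a, X s a - Y s a ≤ c := fun s a =>
    le_ciSup (f := fun x : S × A => X x.1 x.2 - Y x.1 x.2) (Set.finite_range _).bddAbove (s, a)
  have hcγ : c ≤ γ * c := ciSup_le fun x => h c hc x.1 x.2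
  nlinarith [hc s a]

section Bellman

variable (M : MDP S A) {pol : S → A → ℝ}

lemma bellmanPol_sub_le (hpol : ∀ s, pol s ∈ stdSimplex ℝ A) {X Y : S → A → ℝ} {c : ℝ}
    (h : ∀ s a, X s a - Y s a ≤ c) (s : S) (a : A) :
    bellmanPol M pol X s a - bellmanPol M pol Y s a ≤ M.γ * c := by
  simp only [bellmanPol, add_sub_add_left_eq_sub, ← mul_sub]
  exact mul_le_mul_of_nonneg_left (sum_mul_sub_sum_mul_le_of_mem_stdSimplex (M.hp s a)
    fun s' => sum_mul_sub_sum_mul_le_of_mem_stdSimplex (hpol s') (h s')) M.hγ.1.le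

lemma bellmanPol_mono (hpol : ∀ s, pol s ∈ stdSimplex ℝ A) {X Y : S → A → ℝ}
    (h : ∀ s a, X s a ≤ Y s a) (s : S) (a : A) :
    bellmanPol M pol X s a ≤ bellmanPol M pol Y s a := by
  simpa using bellmanPol_sub_le M hpol (c := 0) (fun s a => sub_nonpos.2 (h s a)) s a

lemma bellmanOpt_sub_le {X Y : S → A → ℝ} {c : ℝ} (h : ∀ s a, X s a - Y s a ≤ c) (s : S) (a : A) :
    bellmanOpt M X s a - bellmanOpt M Y s a ≤ M.γ * c := by
  simp only [bellmanOpt, add_sub_add_left_eq_sub, ← mul_sub]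
  exact mul_le_mul_of_nonneg_left (sum_mul_sub_sum_mul_le_of_mem_stdSimplex (M.hp s a)
    fun s' => ciSup_sub_ciSup_le (h s')) M.hγ.1.le

lemma bellmanPol_le_bellmanOpt (hpol : ∀ s, pol s ∈ stdSimplex ℝ A) (Q : S → A → ℝ)
    (s : S) (a : A) : bellmanPol M pol Q s a ≤ bellmanOpt M Q s a := by
  refine add_le_add_right (mul_le_mul_of_nonneg_left (sum_le_sum fun s' _ => ?_) M.hγ.1.le) _
  exact mul_le_mul_of_nonneg_left (sum_mul_le_of_mem_stdSimplex (hpol s')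
    (le_ciSup (Set.finite_range (Q s')).bddAbove)) ((M.hp s a).1 s')

lemma le_of_le_bellmanPol (hpol : ∀ s, pol s ∈ stdSimplex ℝ A) {Qπ Y : S → A → ℝ}
    (hQπ : bellmanPol M pol Qπ = Qπ) (hY : ∀ s a, Y s a ≤ bellmanPol M pol Y s a) :
    ∀ s a, Y s a ≤ Qπ s a :=
  le_of_forall_sub_le_imp_sub_le_mul M.hγ.2 fun _ hc s a => by
    have := bellmanPol_sub_le M hpol hc s a
    rw [hQπ] at this
    linarith [hY s a]

lemma le_of_bellmanPol_eq_of_bellmanOpt_eq (hpol : ∀ s, pol s ∈ stdSimplex ℝ A)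
    {Qπ Qstar : S → A → ℝ} (hQπ : bellmanPol M pol Qπ = Qπ) (hQstar : bellmanOpt M Qstar = Qstar) :
    ∀ s a, Qπ s a ≤ Qstar s a :=
  le_of_forall_sub_le_imp_sub_le_mul M.hγ.2 fun _ hc s a => by
    have := bellmanPol_sub_le M hpol hc s a
    rw [hQπ] at this
    linarith [bellmanPol_le_bellmanOpt M hpol Qstar s a, congrFun (congrFun hQstar s) a]

end Bellman

section Smoothed

variable (M : MDP S A) {ν : (A → ℝ) → ℝ} {pol : S → A → ℝ}

lemma le_nuMax (hν : ContinuousOn ν (stdSimplex ℝ A)) {μ : A → ℝ} (hμ : μ ∈ stdSimplex ℝ A) :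
    ν μ ≤ nuMax ν :=
  le_csSup ((isCompact_stdSimplex ℝ A).bddAbove_image hν) ⟨μ, hμ, rfl⟩

lemma nuMax_eq_of_forall_le {μ₀ : A → ℝ} (hμ₀ : μ₀ ∈ stdSimplex ℝ A)
    (hmax : ∀ μ ∈ stdSimplex ℝ A, ν μ ≤ ν μ₀) : nuMax ν = ν μ₀ :=
  IsGreatest.csSup_eq ⟨⟨μ₀, hμ₀, rfl⟩, by rintro _ ⟨μ, hμ, rfl⟩; exact hmax μ hμ⟩

lemma bddAbove_range_smoothed (hν : ContinuousOn ν (stdSimplex ℝ A)) (η : ℝ) (q : A → ℝ) :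
    BddAbove (Set.range fun μ : stdSimplex ℝ A => ∑ a, μ.1 a * q a + η * ν μ.1) := by
  have hcont : ContinuousOn (fun μ : A → ℝ => ∑ a, μ a * q a + η * ν μ) (stdSimplex ℝ A) :=
    ContinuousOn.add (by fun_prop) (hν.const_smul η)
  simpa only [Set.image_eq_range] using (isCompact_stdSimplex ℝ A).bddAbove_image hcont

lemma smoothedPol_eq_bellmanPol_add (η : ℝ) (Q : S → A → ℝ) (s : S) (a : A) :
    smoothedPol M ν η pol Q s a
      = bellmanPol M pol Q s a + M.γ * η * ∑ s', M.p s a s' * ν (pol s') := by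
  simp only [smoothedPol, bellmanPol, mul_add, sum_add_distrib, mul_left_comm _ η, ← mul_sum]
  ring

lemma smoothedPol_le_bellmanPol_add (hν : ContinuousOn ν (stdSimplex ℝ A))
    (hpol : ∀ s, pol s ∈ stdSimplex ℝ A) {η : ℝ} (hη : 0 ≤ η) (Q : S → A → ℝ) (s : S) (a : A) :
    smoothedPol M ν η pol Q s a ≤ bellmanPol M pol Q s a + M.γ * η * nuMax ν := by
  rw [smoothedPol_eq_bellmanPol_add]
  gcongr
  · exact mul_nonneg M.hγ.1.le hη
  · exact sum_mul_le_of_mem_stdSimplex (M.hp s a) fun s' => le_nuMax hν (hpol s')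

lemma smoothedPol_eq_bellmanPol_add_of_forall_eq {c : ℝ} (hc : ∀ s, ν (pol s) = c) (η : ℝ)
    (Q : S → A → ℝ) (s : S) (a : A) :
    smoothedPol M ν η pol Q s a = bellmanPol M pol Q s a + M.γ * η * c := by
  simp only [smoothedPol_eq_bellmanPol_add, hc, ← sum_mul, (M.hp s a).2, one_mul]

lemma smoothedPol_le_smoothedOpt (hν : ContinuousOn ν (stdSimplex ℝ A))
    (hpol : ∀ s, pol s ∈ stdSimplex ℝ A) (η : ℝ) (Q : S → A → ℝ) (s : S) (a : A) :
    smoothedPol M ν η pol Q s a ≤ smoothedOpt M ν η Q s a := by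
  refine add_le_add_right (mul_le_mul_of_nonneg_left (sum_le_sum fun s' _ => ?_) M.hγ.1.le) _
  exact mul_le_mul_of_nonneg_left (le_ciSup (bddAbove_range_smoothed hν η (Q s')) ⟨_, hpol s'⟩)
    ((M.hp s a).1 s')

lemma bellmanOpt_le_smoothedOpt (hν : ContinuousOn ν (stdSimplex ℝ A))
    (hν_nonneg : ∀ μ ∈ stdSimplex ℝ A, 0 ≤ ν μ) {η : ℝ} (hη : 0 ≤ η) (Q : S → A → ℝ)
    (s : S) (a : A) : bellmanOpt M Q s a ≤ smoothedOpt M ν η Q s a := by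
  classical
  refine add_le_add_right (mul_le_mul_of_nonneg_left (sum_le_sum fun s' _ => ?_) M.hγ.1.le) _
  refine mul_le_mul_of_nonneg_left (ciSup_le fun a' => ?_) ((M.hp s a).1 s')
  let δ : stdSimplex ℝ A := ⟨Pi.single a' 1, single_mem_stdSimplex ℝ a'⟩
  calc Q s' a' ≤ ∑ b, δ.1 b * Q s' b + η * ν δ.1 := by
        simpa [δ, Pi.single_apply] using mul_nonneg hη (hν_nonneg _ δ.2)
    _ ≤ _ := le_ciSup (bddAbove_range_smoothed hν η (Q s')) δ

lemma bellmanPol_one_sub_smul_add_smul (b : ℝ) (X Y : S → A → ℝ) (s : S) (a : A) :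
    bellmanPol M pol ((1 - b) • X + b • Y) s a
      = (1 - b) * bellmanPol M pol X s a + b * bellmanPol M pol Y s a := by
  simp only [bellmanPol, Pi.add_apply, Pi.smul_apply, smul_eq_mul, mul_add, sum_add_distrib,
    mul_left_comm _ (1 - b), mul_left_comm _ b, ← mul_sum]
  ring

end Smoothed

lemma eta_zero (τ : ℝ) (β : ℕ → ℝ) : eta τ β 0 = τ := by
  simp [eta]

lemma eta_succ (τ : ℝ) (β : ℕ → ℝ) (k : ℕ) : eta τ β (k + 1) = (1 - β (k + 1)) * eta τ β k := by
  rw [eta, eta, prod_Icc_succ_top (Nat.le_add_left 1 k)]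
  ring

lemma eta_nonneg {τ : ℝ} (hτ : 0 ≤ τ) {β : ℕ → ℝ} (hβ : ∀ k ≥ 1, β k ∈ Set.Icc (0 : ℝ) 1)
    (k : ℕ) : 0 ≤ eta τ β k :=
  mul_nonneg hτ <| prod_nonneg fun j hj => sub_nonneg.2 (hβ j (mem_Icc.1 hj).1).2

namespace DSPISeq

variable {M : MDP S A} {ν : (A → ℝ) → ℝ} {τ : ℝ} {β : ℕ → ℝ} (D : DSPISeq M ν τ β)

lemma Qbar_succ_apply (k : ℕ) (s : S) (a : A) :
    D.Qbar (k + 1) s a = (1 - β k) * D.Qbar k s a + β k * D.Qpi k s a := by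
  simp [D.hQbarSucc k]

lemma Qbar_one (hβ0 : β 0 = 1) : D.Qbar 1 = D.Qpi 0 := by
  simp [D.hQbarSucc 0, hβ0]

lemma smoothedPol_Qbar_succ_succ (k : ℕ) (s : S) (a : A) :
    smoothedPol M ν (eta τ β (k + 1)) (D.pol (k + 1)) (D.Qbar (k + 1 + 1)) s a
      = (1 - β (k + 1)) * smoothedOpt M ν (eta τ β k) (D.Qbar (k + 1)) s a
        + β (k + 1) * D.Qpi (k + 1) s a := by
  rw [← D.hgreedy k, smoothedPol_eq_bellmanPol_add, smoothedPol_eq_bellmanPol_add, D.hQbarSucc,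
    bellmanPol_one_sub_smul_add_smul, D.hQpi, eta_succ]
  ring

lemma Qbar_add_le_smoothedOpt (hν : ContinuousOn ν (stdSimplex ℝ A)) (hβ0 : β 0 = 1)
    (hβ : ∀ k ≥ 1, β k ∈ Set.Icc (0 : ℝ) 1) (k : ℕ) (s : S) (a : A) :
    D.Qbar (k + 1) s a + M.γ * eta τ β k * nuMax ν
      ≤ smoothedOpt M ν (eta τ β k) (D.Qbar (k + 1)) s a := by
  induction k generalizing s a with
  | zero =>
    have hmax : ∀ s, ν (D.pol 0 s) = nuMax ν := fun s =>
      (nuMax_eq_of_forall_le (D.hpol 0 s) (D.hpol0 s)).symm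
    rw [D.Qbar_one hβ0, eta_zero]
    calc D.Qpi 0 s a + M.γ * τ * nuMax ν = smoothedPol M ν τ (D.pol 0) (D.Qpi 0) s a := by
          rw [smoothedPol_eq_bellmanPol_add_of_forall_eq M hmax, D.hQpi]
      _ ≤ _ := smoothedPol_le_smoothedOpt M hν (D.hpol 0) τ _ s a
  | succ k ih =>
    have hβk := hβ (k + 1) k.succ_pos
    calc D.Qbar (k + 1 + 1) s a + M.γ * eta τ β (k + 1) * nuMax ν
        = (1 - β (k + 1)) * (D.Qbar (k + 1) s a + M.γ * eta τ β k * nuMax ν)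
          + β (k + 1) * D.Qpi (k + 1) s a := by
          rw [D.Qbar_succ_apply, eta_succ]
          ring
      _ ≤ (1 - β (k + 1)) * smoothedOpt M ν (eta τ β k) (D.Qbar (k + 1)) s a
          + β (k + 1) * D.Qpi (k + 1) s a := by
          gcongr
          · linarith [hβk.2]
          · exact ih s a
      _ = smoothedPol M ν (eta τ β (k + 1)) (D.pol (k + 1)) (D.Qbar (k + 1 + 1)) s a :=
          (D.smoothedPol_Qbar_succ_succ k s a).symm
      _ ≤ _ := smoothedPol_le_smoothedOpt M hν (D.hpol (k + 1)) _ _ s a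

lemma Qbar_le_Qpi (hν : ContinuousOn ν (stdSimplex ℝ A)) (hτ : 0 ≤ τ) (hβ0 : β 0 = 1)
    (hβ : ∀ k ≥ 1, β k ∈ Set.Icc (0 : ℝ) 1) (k : ℕ) (s : S) (a : A) :
    D.Qbar (k + 1) s a ≤ D.Qpi (k + 1) s a := by
  refine le_of_le_bellmanPol M (D.hpol (k + 1)) (D.hQpi (k + 1)) (fun s a => ?_) s a
  have h := smoothedPol_le_bellmanPol_add M hν (D.hpol (k + 1)) (eta_nonneg hτ hβ k)
    (D.Qbar (k + 1)) s a
  rw [D.hgreedy k] at h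
  linarith [D.Qbar_add_le_smoothedOpt hν hβ0 hβ k s a]

lemma Qbar_le_Qstar (hν : ContinuousOn ν (stdSimplex ℝ A)) (hτ : 0 ≤ τ) (hβ0 : β 0 = 1)
    (hβ : ∀ k ≥ 1, β k ∈ Set.Icc (0 : ℝ) 1) {Qstar : S → A → ℝ}
    (hQstar : bellmanOpt M Qstar = Qstar) (k : ℕ) (s : S) (a : A) :
    D.Qbar (k + 1) s a ≤ Qstar s a :=
  (D.Qbar_le_Qpi hν hτ hβ0 hβ k s a).trans
    (le_of_bellmanPol_eq_of_bellmanOpt_eq M (D.hpol _) (D.hQpi _) hQstar s a)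

lemma Qstar_sub_Qpi_le (hν : ContinuousOn ν (stdSimplex ℝ A))
    (hν_nonneg : ∀ μ ∈ stdSimplex ℝ A, 0 ≤ ν μ) (hτ : 0 ≤ τ) (hβ0 : β 0 = 1)
    (hβ : ∀ k ≥ 1, β k ∈ Set.Icc (0 : ℝ) 1) {Qstar : S → A → ℝ}
    (hQstar : bellmanOpt M Qstar = Qstar) (k : ℕ) (s : S) (a : A) :
    Qstar s a - D.Qpi (k + 1) s a
      ≤ M.γ * supNormQ (Qstar - D.Qbar (k + 1)) + M.γ * eta τ β k * nuMax ν := by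
  have hη := eta_nonneg hτ hβ k
  have hopt := bellmanOpt_sub_le M (fun s a => (le_abs_self _).trans
    (abs_le_supNormQ (Qstar - D.Qbar (k + 1)) s a)) s a
  have hsmooth := bellmanOpt_le_smoothedOpt M hν hν_nonneg hη (D.Qbar (k + 1)) s a
  have hgreedy := smoothedPol_le_bellmanPol_add M hν (D.hpol (k + 1)) hη (D.Qbar (k + 1)) s a
  have hmono := bellmanPol_mono M (D.hpol (k + 1)) (D.Qbar_le_Qpi hν hτ hβ0 hβ k) s a
  rw [hQstar] at hopt
  rw [D.hgreedy k] at hgreedy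
  rw [D.hQpi] at hmono
  linarith

end DSPISeq

theorem dspi_contractive_recursion_general
    (M : MDP S A)
    (ν : (A → ℝ) → ℝ)
    (hν_cont : ContinuousOn ν (stdSimplex ℝ A))
    (hν_nonneg : ∀ μ ∈ stdSimplex ℝ A, 0 ≤ ν μ)
    (τ : ℝ) (hτ : 0 ≤ τ)
    (β : ℕ → ℝ) (hβ0 : β 0 = 1) (hβ : ∀ k ≥ 1, β k ∈ Set.Icc (0 : ℝ) 1)
    (D : DSPISeq M ν τ β)
    (Qstar : S → A → ℝ) (hQstar : bellmanOpt M Qstar = Qstar) :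
    ∀ k ≥ 1,
      supNormQ (Qstar - D.Qbar (k + 1))
        ≤ (1 - (1 - M.γ) * β k) * supNormQ (Qstar - D.Qbar k)
          + M.γ * β k * eta τ β (k - 1) * nuMax ν := by
  intro n hn
  obtain ⟨k, rfl⟩ := Nat.exists_eq_add_of_le' hn
  obtain ⟨hβk₀, hβk₁⟩ := hβ (k + 1) k.succ_pos
  refine supNormQ_le fun s a => ?_
  have hnonneg := sub_nonneg.2 (D.Qbar_le_Qstar hν_cont hτ hβ0 hβ hQstar (k + 1) s a)
  have hprev := (le_abs_self _).trans (abs_le_supNormQ (Qstar - D.Qbar (k + 1)) s a)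
  have hQpi := D.Qstar_sub_Qpi_le hν_cont hν_nonneg hτ hβ0 hβ hQstar k s a
  simp only [Pi.sub_apply, Nat.add_sub_cancel] at hprev ⊢
  rw [abs_of_nonneg hnonneg, D.Qbar_succ_apply]
  linarith [mul_le_mul_of_nonneg_left hprev (sub_nonneg.2 hβk₁),
    mul_le_mul_of_nonneg_left hQpi hβk₀]

/-- **Contractive recursion for DSPI** (Lemma 2). -/
theorem dspi_contractive_recursion
    (M : MDP S A)
    (ν : (A → ℝ) → ℝ)
    (hν_cont : ContinuousOn ν (stdSimplex ℝ A))
    (hν_nonneg : ∀ μ ∈ stdSimplex ℝ A, 0 ≤ ν μ)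
    (hν_conc : ConcaveOn ℝ (stdSimplex ℝ A) ν)
    (τ : ℝ) (hτ : 0 ≤ τ)
    (β : ℕ → ℝ) (hβ0 : β 0 = 1) (hβ : ∀ k ≥ 1, β k ∈ Set.Icc (0 : ℝ) 1)
    (D : DSPISeq M ν τ β)
    (Qstar : S → A → ℝ) (hQstar : bellmanOpt M Qstar = Qstar) :
    ∀ k ≥ 1,
      supNormQ (Qstar - D.Qbar (k + 1))
        ≤ (1 - (1 - M.γ) * β k) * supNormQ (Qstar - D.Qbar k)
          + M.γ * β k * eta τ β (k - 1) * nuMax ν :=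
  dspi_contractive_recursion_general M ν hν_cont hν_nonneg τ hτ β hβ0 hβ D Qstar hQstar
end
end
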